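/- arXiv:1103.1619 — 2 statements merged into one kernel-verified Lean document; each statement's English description precedes it below -/
import Mathlib

section
/- Let β_K(T) = H ρ_K (2γ - RT/(ū(1-ū)) - α ρ_K) where H, α, γ, R > 0, ū ∈ (0,1), and ρ_K = Σ_i (k_i π / L_i)² for k = (k1,k2,k3) nonnegative integers not all zero, with L = L1 ≥ L2 ≥ L3 > 0. Define T_c = (ū(1-ū)/R)(2γ - απ²/L²) and assume T_c > 0. Then for every such K, β_K(T) < 0 whenever T > T_c. -/
open Real

/-- For `T > T_c`, every eigenvalue `β_K(T) = H ρ_K (2γ - RT/(u(1-u)) - α ρ_K)` is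
negative, where `ρ_K = Σ (k_i π / L_i)²`, `L = L₁ ≥ L₂ ≥ L₃ > 0` and
`T_c = (u(1-u)/R)(2γ - απ²/L²) > 0`. -/
theorem beta_K_neg_of_T_gt_Tc
    (H α γ R u L1 L2 L3 : ℝ)
    (hH : 0 < H) (hα : 0 < α) (hγ : 0 < γ) (hR : 0 < R)
    (hu : u ∈ Set.Ioo (0:ℝ) 1)
    (hL3 : 0 < L3) (hL32 : L3 ≤ L2) (hL21 : L2 ≤ L1)
    (k1 k2 k3 : ℕ) (hk : ¬(k1 = 0 ∧ k2 = 0 ∧ k3 = 0))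
    (Tc : ℝ) (hTc : Tc = (u * (1 - u) / R) * (2 * γ - α * π ^ 2 / L1 ^ 2))
    (hTcpos : 0 < Tc)
    (T : ℝ) (hT : Tc < T) :
    H * ((k1 * π / L1) ^ 2 + (k2 * π / L2) ^ 2 + (k3 * π / L3) ^ 2) *
      (2 * γ - R * T / (u * (1 - u)) -
        α * ((k1 * π / L1) ^ 2 + (k2 * π / L2) ^ 2 + (k3 * π / L3) ^ 2)) < 0 := by
  obtain ⟨hu0, hu1⟩ := hu
  have hL2 : 0 < L2 := lt_of_lt_of_le hL3 hL32
  have hL1 : 0 < L1 := lt_of_lt_of_le hL2 hL21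
  have hπ : 0 < π := pi_pos
  have huu : 0 < u * (1 - u) := mul_pos hu0 (by linarith)
  have hbase : ∀ (k : ℕ) (L : ℝ), 0 < L → L ≤ L1 → k ≠ 0 →
      (π / L1) ^ 2 ≤ ((k : ℝ) * π / L) ^ 2 := by
    intro k L hL hLL hk0
    have h1 : (1 : ℝ) ≤ (k : ℝ) := by exact_mod_cast Nat.one_le_iff_ne_zero.mpr hk0
    have hle : π / L1 ≤ (k : ℝ) * π / L := by
      calc π / L1 ≤ π / L := by gcongr
        _ ≤ (k : ℝ) * π / L := by gcongr; nlinarith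
    exact pow_le_pow_left₀ (by positivity) hle 2
  set ρ := ((k1 : ℝ) * π / L1) ^ 2 + ((k2 : ℝ) * π / L2) ^ 2 + ((k3 : ℝ) * π / L3) ^ 2
    with hρdef
  have hρ : (π / L1) ^ 2 ≤ ρ := by
    by_cases h1 : k1 = 0
    · by_cases h2 : k2 = 0
      · have h3 : k3 ≠ 0 := fun h3 => hk ⟨h1, h2, h3⟩
        have := hbase k3 L3 hL3 (hL32.trans hL21) h3
        have hn1 : (0:ℝ) ≤ ((k1 : ℝ) * π / L1) ^ 2 := by positivity
        have hn2 : (0:ℝ) ≤ ((k2 : ℝ) * π / L2) ^ 2 := by positivity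
        simp only [hρdef]; linarith
      · have := hbase k2 L2 hL2 hL21 h2
        have hn1 : (0:ℝ) ≤ ((k1 : ℝ) * π / L1) ^ 2 := by positivity
        have hn3 : (0:ℝ) ≤ ((k3 : ℝ) * π / L3) ^ 2 := by positivity
        simp only [hρdef]; linarith
    · have := hbase k1 L1 hL1 le_rfl h1
      have hn2 : (0:ℝ) ≤ ((k2 : ℝ) * π / L2) ^ 2 := by positivity
      have hn3 : (0:ℝ) ≤ ((k3 : ℝ) * π / L3) ^ 2 := by positivity
      simp only [hρdef]; linarith
  have hρpos : 0 < ρ := lt_of_lt_of_le (by positivity) hρ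
  have hX : R * Tc / (u * (1 - u)) = 2 * γ - α * π ^ 2 / L1 ^ 2 := by
    rw [hTc]; field_simp
  have hRT : 2 * γ - α * π ^ 2 / L1 ^ 2 < R * T / (u * (1 - u)) := by
    rw [← hX]; gcongr
  have hdp : (π / L1) ^ 2 = π ^ 2 / L1 ^ 2 := div_pow π L1 2
  have hfac : 2 * γ - R * T / (u * (1 - u)) - α * ρ < 0 := by
    have h1 : α * (π / L1) ^ 2 ≤ α * ρ := mul_le_mul_of_nonneg_left hρ hα.le
    have h2 : α * (π / L1) ^ 2 = α * π ^ 2 / L1 ^ 2 := by rw [hdp]; ring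
    linarith
  exact mul_neg_of_pos_of_neg (mul_pos hH hρpos) hfac
end

section
/- Let σ1, σ2 ∈ ℝ with σ1 ≠ σ2. The 13 lines in ℝ³ given by {y_i = y_j = 0} (i≠j), {y_i² = y_j², y_k = 0} (i,j,k distinct), and {y1² = y2² = y3²} are invariant under the flow of dy_i/dt = -y_i(σ1 y_i² + σ2 (y_j² + y_k²)) for {i,j,k} = {1,2,3}. -/
/-- The 13 straight lines `{yᵢ = yⱼ = 0}`, `{yᵢ² = yⱼ², y_k = 0}`, `{y₁² = y₂² = y₃²}`
are invariant under the cubic vector field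
`yᵢ' = -yᵢ(σ₁yᵢ² + σ₂(yⱼ² + y_k²))`: the field is tangent to (parallel to) each such
line at every one of its points. -/
theorem thirteen_invariant_lines
    (σ1 σ2 : ℝ) (hσ : σ1 ≠ σ2) :
    ∀ y : ℝ × ℝ × ℝ,
      ((y.2.1 = 0 ∧ y.2.2 = 0) ∨ (y.1 = 0 ∧ y.2.2 = 0) ∨ (y.1 = 0 ∧ y.2.1 = 0) ∨
        (y.1 ^ 2 = y.2.1 ^ 2 ∧ y.2.2 = 0) ∨ (y.1 ^ 2 = y.2.2 ^ 2 ∧ y.2.1 = 0) ∨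
        (y.2.1 ^ 2 = y.2.2 ^ 2 ∧ y.1 = 0) ∨
        (y.1 ^ 2 = y.2.1 ^ 2 ∧ y.2.1 ^ 2 = y.2.2 ^ 2)) →
      ∃ c : ℝ,
        ((-(y.1) * (σ1 * y.1 ^ 2 + σ2 * (y.2.1 ^ 2 + y.2.2 ^ 2)),
          -(y.2.1) * (σ1 * y.2.1 ^ 2 + σ2 * (y.1 ^ 2 + y.2.2 ^ 2)),
          -(y.2.2) * (σ1 * y.2.2 ^ 2 + σ2 * (y.1 ^ 2 + y.2.1 ^ 2))) : ℝ × ℝ × ℝ)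
          = c • y := by
  rintro ⟨a, b, c⟩ (⟨h1, h2⟩ | ⟨h1, h2⟩ | ⟨h1, h2⟩ | ⟨h1, h2⟩ | ⟨h1, h2⟩ | ⟨h1, h2⟩ | ⟨h1, h2⟩) <;>
    dsimp only at h1 h2 ⊢
  · exact ⟨-(σ1 * a ^ 2), by subst h1 h2; simp [Prod.ext_iff]; ring⟩
  · exact ⟨-(σ1 * b ^ 2), by subst h1 h2; simp [Prod.ext_iff]; ring⟩
  · exact ⟨-(σ1 * c ^ 2), by subst h1 h2; simp [Prod.ext_iff]; ring⟩
  · subst h2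
    refine ⟨-((σ1 + σ2) * a ^ 2), ?_⟩
    simp only [Prod.smul_mk, smul_eq_mul, Prod.mk.injEq]
    exact ⟨by linear_combination σ2 * a * h1, by linear_combination σ1 * b * h1, by ring⟩
  · subst h2
    refine ⟨-((σ1 + σ2) * a ^ 2), ?_⟩
    simp only [Prod.smul_mk, smul_eq_mul, Prod.mk.injEq]
    exact ⟨by linear_combination σ2 * a * h1, by ring, by linear_combination σ1 * c * h1⟩
  · subst h2
    refine ⟨-((σ1 + σ2) * b ^ 2), ?_⟩
    simp only [Prod.smul_mk, smul_eq_mul, Prod.mk.injEq]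
    exact ⟨by ring, by linear_combination σ2 * b * h1, by linear_combination σ1 * c * h1⟩
  · refine ⟨-((σ1 + 2 * σ2) * a ^ 2), ?_⟩
    simp only [Prod.smul_mk, smul_eq_mul, Prod.mk.injEq]
    exact ⟨by linear_combination σ2 * a * h1 + σ2 * a * (h1.trans h2),
      by linear_combination σ1 * b * h1 + σ2 * b * (h1.trans h2),
      by linear_combination σ1 * c * (h1.trans h2) + σ2 * c * h1⟩
end
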